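/- In the sublevel-set setting, assume (a), (b) and (c). Then the set-valued map C(t) = ∩_{i=1}^m {x ∈ H : g_i(t,x) ≤ 0} satisfies condition (H4). -/

import Mathlib

/-!
By Gordan's alternative, positive linear independence of the `ε`-active gradients yields at
every point of the compact set `𝒬_ε` a vector of norm at most `1` along which all `ε`-active
constraints strictly decrease; continuity of `g_i` and `∇g_i` and compactness make the rate of
decrease uniform, say at least `δ > 0`. A boundary point `x` of `C(t)` has a vanishing constraint,
so `(t, x) ∈ 𝒬_ε`. The first-order Taylor estimate coming from the Lipschitz gradients then shows
that the convex hull of `x` and a small ball around `x + ρ v` stays in `C(t)`: along it the active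
constraints decrease, while the inactive ones, being below `-ε` at `x`, cannot reach `0` within
distance `2ρ`.
-/

open Set Metric
open scoped Pointwise

/-- Condition (H4) with constants `r, L`. -/
def CondH4 {H : Type*} [NormedAddCommGroup H] [InnerProductSpace ℝ H]
    (T : ℝ) (C : ℝ → Set H) (r L : ℝ) : Prop :=
  ∀ t ∈ Icc (0:ℝ) T, ∀ x ∈ frontier (C t), ∃ z : H,
    convexHull ℝ ({x} ∪ ball z (2 * r)) ⊆ C t ∧ ‖z - x‖ ≤ L * r

/-- The moving set given as a finite intersection of sublevel sets. -/
def Csub {E : Type*} {m : ℕ} (g : Fin m → ℝ → E → ℝ) (t : ℝ) : Set E :=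
  {x | ∀ i, g i t x ≤ 0}

/-- The set of `ε`-active indices at `(t, x)`. -/
def Iactive {E : Type*} {m : ℕ} (g : Fin m → ℝ → E → ℝ) (ε t : ℝ) (x : E) :
    Set (Fin m) :=
  {i | -ε ≤ g i t x ∧ g i t x ≤ 0}

open Filter Topology
open scoped Gradient RealInnerProductSpace

section Gordan

variable {ι E : Type*} [Fintype ι]

theorem zero_notMem_convexHull_image_of_posLinIndep [AddCommGroup E] [Module ℝ E]
    (a : ι → E) (s : Set ι)
    (h : ∀ α : ι → ℝ, (∀ i, 0 ≤ α i) → (∀ i, i ∉ s → α i = 0) →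
      ∑ i, α i • a i = 0 → ∀ i, α i = 0) :
    (0 : E) ∉ convexHull ℝ (a '' s) := by
  classical
  rw [mem_convexHull_iff_exists_fintype]
  rintro ⟨κ, _, w, z, hw₀, hw₁, hz, hsum⟩
  choose p hp hpz using hz
  set α : ι → ℝ := fun i => ∑ j : {j // p j = i}, w j
  have hα₁ : ∑ i, α i = 1 := by rw [Fintype.sum_fiberwise p w, hw₁]
  have hα : ∑ i, α i • a i = 0 := by
    simp only [α, Finset.sum_smul]
    rw [← hsum, ← Fintype.sum_fiberwise p (fun j => w j • z j)]
    refine Finset.sum_congr rfl fun i _ => Finset.sum_congr rfl fun j _ => ?_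
    rw [← hpz, j.2]
  have hα₀ := h α (fun i => Finset.sum_nonneg fun j _ => hw₀ j)
    (fun i hi => Finset.sum_eq_zero fun j _ => absurd (j.2 ▸ hp j) hi) hα
  simp [hα₀] at hα₁

variable [NormedAddCommGroup E] [InnerProductSpace ℝ E] [CompleteSpace E]

theorem exists_inner_neg_of_zero_notMem_convexHull {S : Set E} (hS : S.Finite)
    (h0 : (0 : E) ∉ convexHull ℝ S) : ∃ v : E, ‖v‖ ≤ 1 ∧ ∀ a ∈ S, ⟪a, v⟫ < 0 := by
  obtain ⟨f, u, hf0, hfS⟩ := geometric_hahn_banach_point_closed (convex_convexHull ℝ S)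
    (hS.isCompact_convexHull (𝕜 := ℝ)).isClosed h0
  set w := (InnerProductSpace.toDual ℝ E).symm f
  have hw : ∀ a ∈ S, 0 < ⟪w, a⟫ := fun a ha => by
    rw [InnerProductSpace.toDual_symm_apply]
    exact (map_zero f ▸ hf0).trans (hfS a (subset_convexHull ℝ S ha))
  refine ⟨-(‖w‖⁻¹ • w), ?_, fun a ha => ?_⟩
  · rw [norm_neg, norm_smul, norm_inv, norm_norm]
    exact inv_mul_le_one_of_le₀ le_rfl (norm_nonneg w)
  · have hwa := hw a ha
    have hw0 : 0 < ‖w‖⁻¹ := inv_pos.2 (norm_pos_iff.2 fun h => by simp [h] at hwa)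
    rw [inner_neg_right, real_inner_smul_right, real_inner_comm]
    nlinarith

theorem exists_inner_neg_of_posLinIndep (a : ι → E) (s : Set ι)
    (h : ∀ α : ι → ℝ, (∀ i, 0 ≤ α i) → (∀ i, i ∉ s → α i = 0) →
      ∑ i, α i • a i = 0 → ∀ i, α i = 0) :
    ∃ v : E, ‖v‖ ≤ 1 ∧ ∀ i ∈ s, ⟪a i, v⟫ < 0 := by
  obtain ⟨v, hv, hneg⟩ := exists_inner_neg_of_zero_notMem_convexHull (s.toFinite.image a)
    (zero_notMem_convexHull_image_of_posLinIndep a s h)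
  exact ⟨v, hv, fun i hi => hneg _ (mem_image_of_mem a hi)⟩

end Gordan

theorem IsCompact.exists_pos_forall_of_nhdsWithin {X : Type*} [TopologicalSpace X] {K : Set X}
    (hK : IsCompact K) {P : ℝ → X → Prop} (hP : ∀ ⦃δ δ' x⦄, δ' ≤ δ → P δ x → P δ' x)
    (hloc : ∀ x ∈ K, ∃ δ > 0, ∀ᶠ y in 𝓝[K] x, P δ y) :
    ∃ δ > 0, ∀ x ∈ K, P δ x := by
  refine hK.induction_on (p := fun s => ∃ δ > 0, ∀ x ∈ s, P δ x) ⟨1, one_pos, by simp⟩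
    (fun s t hst ⟨δ, hδ, h⟩ => ⟨δ, hδ, fun x hx => h x (hst hx)⟩)
    (fun s t ⟨δ₁, hδ₁, h₁⟩ ⟨δ₂, hδ₂, h₂⟩ => ⟨min δ₁ δ₂, lt_min hδ₁ hδ₂, ?_⟩) fun x hx => ?_
  · rintro x (hx | hx)
    exacts [hP (min_le_left _ _) (h₁ x hx), hP (min_le_right _ _) (h₂ x hx)]
  · obtain ⟨δ, hδ, h⟩ := hloc x hx
    exact ⟨{y | P δ y}, h, δ, hδ, fun y hy => hy⟩

theorem IsCompact.exists_uniform_inner_neg {X ι E : Type*} [TopologicalSpace X] [Finite ι]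
    [NormedAddCommGroup E] [InnerProductSpace ℝ E] {K : Set X} (hK : IsCompact K)
    {f : ι → X → ℝ} {a : ι → X → E} (hf : ∀ i, ContinuousOn (f i) K)
    (ha : ∀ i, ContinuousOn (a i) K) {ε : ℝ}
    (hdir : ∀ x ∈ K, ∃ v : E, ‖v‖ ≤ 1 ∧ ∀ i, -ε ≤ f i x → ⟪a i x, v⟫ < 0) :
    ∃ δ > 0, ∀ x ∈ K, ∃ v : E, ‖v‖ ≤ 1 ∧ ∀ i, -ε ≤ f i x → ⟪a i x, v⟫ ≤ -δ := by
  refine hK.exists_pos_forall_of_nhdsWithin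
    (fun δ δ' x hδ ⟨v, hv, h⟩ => ⟨v, hv, fun i hi => (h i hi).trans (neg_le_neg hδ)⟩)
    fun x hx => ?_
  obtain ⟨v, hv, hneg⟩ := hdir x hx
  -- Indices inactive at `x` stay inactive nearby; active ones keep a negative inner product.
  have hloc : ∀ i, ∀ᶠ δ in 𝓝[>] (0 : ℝ), ∀ᶠ y in 𝓝[K] x, -ε ≤ f i y → ⟪a i y, v⟫ ≤ -δ := by
    intro i
    by_cases hi : -ε ≤ f i x
    · have hδ : ∀ᶠ δ in 𝓝[>] (0 : ℝ), δ < -⟪a i x, v⟫ :=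
        nhdsWithin_le_nhds (eventually_lt_nhds (neg_pos.2 (hneg i hi)))
      filter_upwards [hδ] with δ hδ
      filter_upwards [((ha i x hx).inner continuousWithinAt_const).eventually_lt_const
        (lt_neg_of_lt_neg hδ)] with y hy _ using hy.le
    · refine Eventually.of_forall fun δ => ?_
      filter_upwards [(hf i x hx).eventually_lt_const (not_le.1 hi)] with y hy hy'
      exact absurd hy' (not_le.2 hy)
  obtain ⟨δ, hev, hδ⟩ := ((eventually_all.2 hloc).and self_mem_nhdsWithin).exists
  exact ⟨δ, hδ, (eventually_all.2 hev).mono fun y hy => ⟨v, hv, hy⟩⟩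

theorem IsCompact.exists_pos_forall_norm_le {X ι F : Type*} [TopologicalSpace X] [Fintype ι]
    [NormedAddCommGroup F] {K : Set X} (hK : IsCompact K) {a : ι → X → F}
    (ha : ∀ i, ContinuousOn (a i) K) : ∃ G > 0, ∀ x ∈ K, ∀ i, ‖a i x‖ ≤ G := by
  obtain ⟨G, hG⟩ := hK.exists_bound_of_continuousOn (continuousOn_pi.2 ha)
  exact ⟨max G 1, by positivity,
    fun x hx i => (norm_le_pi_norm _ i).trans ((hG x hx).trans (le_max_left _ _))⟩

section Cone

variable {E : Type*} [NormedAddCommGroup E] [InnerProductSpace ℝ E]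

theorem exists_eq_add_smul_of_mem_convexHull_insert_ball {x y z : E} {R : ℝ} (hR : 0 < R)
    (hy : y ∈ convexHull ℝ ({x} ∪ ball z R)) :
    ∃ b ∈ Icc (0 : ℝ) 1, ∃ w ∈ ball z R, y = x + b • (w - x) := by
  rw [singleton_union, convexHull_insert (nonempty_ball.2 hR), (convex_ball z R).convexHull_eq,
    mem_convexJoin] at hy
  obtain ⟨_, rfl, w, hw, a, b, ha, hb, hab, rfl⟩ := hy
  refine ⟨b, ⟨hb, by linarith⟩, w, hw, ?_⟩
  rw [eq_sub_of_add_eq hab]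
  module

variable [CompleteSpace E]

theorem norm_gradient_sub_gradient (f : E → ℝ) (x y : E) :
    ‖∇ f x - ∇ f y‖ = ‖fderiv ℝ f x - fderiv ℝ f y‖ := by
  rw [gradient, gradient, ← map_sub, LinearIsometryEquiv.norm_map]

theorem abs_sub_sub_inner_gradient_le {f : E → ℝ} {x y : E} {C : ℝ}
    (hf : ∀ z ∈ closedBall x ‖y - x‖, DifferentiableAt ℝ f z)
    (hC : ∀ z ∈ closedBall x ‖y - x‖, ‖∇ f z - ∇ f x‖ ≤ C) :
    |f y - f x - ⟪∇ f x, y - x⟫| ≤ C * ‖y - x‖ := by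
  rw [inner_gradient_left, ← Real.norm_eq_abs]
  exact (convex_closedBall x _).norm_image_sub_le_of_norm_fderiv_le' hf
    (fun z hz => norm_gradient_sub_gradient f z x ▸ hC z hz)
    (mem_closedBall_self (norm_nonneg _)) (mem_closedBall_iff_norm.2 le_rfl)

theorem convexHull_insert_ball_subset_setOf_nonpos {f : E → ℝ} {x v : E}
    {ε δ η L G ρ r : ℝ} (hf : ∀ y ∈ closedBall x η, DifferentiableAt ℝ f y)
    (hLip : ∀ y ∈ closedBall x η, ‖∇ f y - ∇ f x‖ ≤ L * ‖y - x‖) (hL : 0 ≤ L)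
    (hfx : f x ≤ 0) (hG : ‖∇ f x‖ ≤ G) (hv : ‖v‖ ≤ 1) (hdir : -ε ≤ f x → ⟪∇ f x, v⟫ ≤ -δ)
    (hρ : 0 < ρ) (hr : 0 < r) (hrρ : 2 * r ≤ ρ) (hρη : 2 * ρ ≤ η) (hLρ : 8 * L * ρ ≤ δ)
    (hrG : 8 * r * G ≤ ρ * δ) (hρε : ρ * (2 * G + δ) ≤ ε) :
    convexHull ℝ ({x} ∪ ball (x + ρ • v) (2 * r)) ⊆ {y | f y ≤ 0} := by
  intro y hy
  obtain ⟨b, ⟨hb₀, hb₁⟩, w, hw, rfl⟩ :=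
    exists_eq_add_smul_of_mem_convexHull_insert_ball (by positivity) hy
  set u := w - (x + ρ • v)
  have hu : ‖u‖ < 2 * r := by rwa [mem_ball, dist_eq_norm] at hw
  have hwx : w - x = ρ • v + u := by simp only [u]; abel
  have hGv : ⟪∇ f x, v⟫ ≤ G := (real_inner_le_norm _ _).trans (by nlinarith [norm_nonneg (∇ f x)])
  have hGu : ⟪∇ f x, u⟫ ≤ G * (2 * r) :=
    (real_inner_le_norm _ _).trans (by nlinarith [norm_nonneg (∇ f x), norm_nonneg u])
  have hlin : ⟪∇ f x, b • (w - x)⟫ = b * (ρ * ⟪∇ f x, v⟫ + ⟪∇ f x, u⟫) := by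
    rw [hwx, real_inner_smul_right, inner_add_right, real_inner_smul_right]
  have hnorm : ‖b • (w - x)‖ ≤ b * (2 * ρ) := by
    rw [norm_smul, Real.norm_of_nonneg hb₀, hwx]
    gcongr
    calc ‖ρ • v + u‖ ≤ ρ * ‖v‖ + ‖u‖ := by
          grw [norm_add_le, norm_smul, Real.norm_of_nonneg hρ.le]
      _ ≤ 2 * ρ := by nlinarith
  have hη' : ‖x + b • (w - x) - x‖ ≤ η := by rw [add_sub_cancel_left]; nlinarith
  have htaylor := abs_sub_sub_inner_gradient_le (C := L * ‖b • (w - x)‖)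
    (fun z hz => hf z (closedBall_subset_closedBall hη' hz))
    (fun z hz => (hLip z (closedBall_subset_closedBall hη' hz)).trans
      (mul_le_mul_of_nonneg_left (by simpa [dist_eq_norm] using hz) hL))
  rw [add_sub_cancel_left] at htaylor
  have hquad : L * ‖b • (w - x)‖ * ‖b • (w - x)‖ ≤ b * (ρ * δ / 2) := by
    have h₁ : ‖b • (w - x)‖ * ‖b • (w - x)‖ ≤ b * (2 * ρ) * (b * (2 * ρ)) :=
      mul_le_mul hnorm hnorm (norm_nonneg _) (by positivity)
    have h₂ : b * (2 * ρ) * (b * (2 * ρ)) ≤ b * (4 * ρ ^ 2) := by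
      rw [show b * (2 * ρ) * (b * (2 * ρ)) = b * b * (4 * ρ ^ 2) by ring]
      exact mul_le_mul_of_nonneg_right (by nlinarith) (by positivity)
    calc L * ‖b • (w - x)‖ * ‖b • (w - x)‖ ≤ L * (b * (4 * ρ ^ 2)) := by
          rw [mul_assoc]; exact mul_le_mul_of_nonneg_left (h₁.trans h₂) hL
      _ ≤ b * (ρ * δ / 2) := by nlinarith
  have hval : f (x + b • (w - x)) ≤ f x + b * (ρ * ⟪∇ f x, v⟫ + ⟪∇ f x, u⟫ + ρ * δ / 2) := by
    linarith [(abs_le.1 htaylor).2]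
  have hδ : 0 ≤ δ := by nlinarith
  show f (x + b • (w - x)) ≤ 0
  by_cases hact : -ε ≤ f x
  · have : ρ * ⟪∇ f x, v⟫ + ⟪∇ f x, u⟫ + ρ * δ / 2 ≤ 0 := by nlinarith [hdir hact]
    nlinarith
  · have : ρ * ⟪∇ f x, v⟫ + ⟪∇ f x, u⟫ + ρ * δ / 2 ≤ ε := by nlinarith [norm_nonneg (∇ f x)]
    nlinarith [norm_nonneg (∇ f x)]

end Cone

theorem exists_eq_zero_of_mem_frontier_setOf_forall_nonpos {X ι : Type*} [TopologicalSpace X]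
    [Finite ι] {f : ι → X → ℝ}
    (hf : ∀ i, Continuous (f i)) {x : X} (hx : x ∈ frontier {y | ∀ i, f i y ≤ 0}) :
    (∀ i, f i x ≤ 0) ∧ ∃ i, f i x = 0 := by
  have hclosed : IsClosed {y | ∀ i, f i y ≤ 0} := by
    simpa only [ofPred_forall] using isClosed_iInter fun i => isClosed_le (hf i) continuous_const
  have hxS : ∀ i, f i x ≤ 0 := hclosed.frontier_subset hx
  refine ⟨hxS, ?_⟩
  by_contra! h
  have hopen : IsOpen {y | ∀ i, f i y < 0} := by
    simpa only [ofPred_forall] using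
      isOpen_iInter_of_finite fun i => isOpen_lt (hf i) continuous_const
  exact hx.2 (interior_maximal (fun y hy i => (hy i).le) hopen fun i => (hxS i).lt_of_ne (h i))

section ActiveSet

variable {E : Type*} [TopologicalSpace E] {m : ℕ} (g : Fin m → ℝ → E → ℝ) (T ε : ℝ)

def activeSet : Set (ℝ × E) :=
  {p | p.1 ∈ Icc (0:ℝ) T ∧ p.2 ∈ Csub g p.1 ∧ (Iactive g ε p.1 p.2).Nonempty}

theorem isClosed_activeSet
    (hg : ∀ i, ContinuousOn (fun p : ℝ × E => g i p.1 p.2) (Icc (0:ℝ) T ×ˢ univ)) :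
    IsClosed (activeSet g T ε) := by
  have hS : IsClosed {y : Fin m → ℝ | (∀ i, y i ≤ 0) ∧ ∃ i, -ε ≤ y i ∧ y i ≤ 0} := by
    simp only [ofPred_and, ofPred_forall, ofPred_exists]
    exact (isClosed_iInter fun i => isClosed_le (continuous_apply i) continuous_const).inter
      (isClosed_iUnion_of_finite fun i =>
        (isClosed_le continuous_const (continuous_apply i)).inter
          (isClosed_le (continuous_apply i) continuous_const))
  have h := (continuousOn_pi.2 hg).preimage_isClosed_of_isClosed
    (isClosed_Icc.prod isClosed_univ) hS
  convert h using 1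
  ext p
  simp [activeSet, Csub, Iactive, Set.Nonempty]

end ActiveSet

theorem exists_cone_scale {δ ε η L G : ℝ} (hδ : 0 < δ) (hε : 0 < ε) (hη : 0 < η) (hL : 0 < L)
    (hG : 0 < G) :
    ∃ ρ > 0, ∃ r > 0, 2 * r ≤ ρ ∧ 2 * ρ ≤ η ∧ 8 * L * ρ ≤ δ ∧ 8 * r * G ≤ ρ * δ ∧
      ρ * (2 * G + δ) ≤ ε := by
  set ρ := min (η / 2) (min (δ / (8 * L)) (ε / (2 * G + δ)))
  have hρ : 0 < ρ := by positivity
  set r := min (ρ / 2) (ρ * δ / (8 * G))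
  have hr : 0 < r := by positivity
  refine ⟨ρ, hρ, r, hr, ?_, ?_, ?_, ?_, ?_⟩
  · linarith [min_le_left (ρ / 2) (ρ * δ / (8 * G))]
  · linarith [min_le_left (η / 2) (min (δ / (8 * L)) (ε / (2 * G + δ)))]
  · have : ρ ≤ δ / (8 * L) := (min_le_right _ _).trans (min_le_left _ _)
    rw [le_div_iff₀ (by positivity)] at this
    linarith
  · have : r ≤ ρ * δ / (8 * G) := min_le_right _ _
    rw [le_div_iff₀ (by positivity)] at this
    linarith
  · have : ρ ≤ ε / (2 * G + δ) := (min_le_right _ _).trans (min_le_right _ _)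
    rwa [le_div_iff₀ (by positivity)] at this

theorem stmt12_general (d m : ℕ) (T : ℝ)
    (g : Fin m → ℝ → EuclideanSpace ℝ (Fin d) → ℝ)
    (hdiff : ∀ i, ∀ t ∈ Icc (0:ℝ) T, ∀ x, DifferentiableAt ℝ (g i t) x)
    -- assumption (a)
    (ε : ℝ) (hε : 0 < ε)
    (hQbdd : Bornology.IsBounded {p : ℝ × EuclideanSpace ℝ (Fin d) |
      p.1 ∈ Icc (0:ℝ) T ∧ p.2 ∈ Csub g p.1 ∧ (Iactive g ε p.1 p.2).Nonempty})
    (hPLI : ∀ t ∈ Icc (0:ℝ) T, ∀ x ∈ Csub g t, (Iactive g ε t x).Nonempty →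
      ∀ α : Fin m → ℝ, (∀ i, 0 ≤ α i) → (∀ i, i ∉ Iactive g ε t x → α i = 0) →
        ∑ i, α i • gradient (g i t) x = 0 → ∀ i, α i = 0)
    -- assumption (b)
    (hg_cont : ∀ i, ContinuousOn (fun p : ℝ × EuclideanSpace ℝ (Fin d) => g i p.1 p.2)
      (Icc (0:ℝ) T ×ˢ univ))
    (hgrad_cont : ∀ i, ContinuousOn
      (fun p : ℝ × EuclideanSpace ℝ (Fin d) => gradient (g i p.1) p.2)
      (Icc (0:ℝ) T ×ˢ univ))
    -- assumption (c)
    (hLip : ∃ L > 0, ∃ η > 0, ∀ t ∈ Icc (0:ℝ) T, ∀ i,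
      ∀ x ∈ Csub g t + closedBall (0 : EuclideanSpace ℝ (Fin d)) η,
      ∀ y ∈ Csub g t + closedBall (0 : EuclideanSpace ℝ (Fin d)) η,
        ‖gradient (g i t) x - gradient (g i t) y‖ ≤ L * ‖x - y‖) :
    ∃ r > 0, ∃ L > 0, CondH4 T (Csub g) r L := by
  obtain ⟨L, hL, η, hη, hLip⟩ := hLip
  set Q := activeSet g T ε
  have hQD : Q ⊆ Icc (0:ℝ) T ×ˢ univ := fun p hp => ⟨hp.1, trivial⟩
  have hQ : IsCompact Q := isCompact_of_isClosed_isBounded (isClosed_activeSet g T ε hg_cont) hQbdd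
  obtain ⟨δ, hδ, hdir⟩ := hQ.exists_uniform_inner_neg (fun i => (hg_cont i).mono hQD)
    (fun i => (hgrad_cont i).mono hQD) fun p hp => by
      obtain ⟨v, hv, hneg⟩ := exists_inner_neg_of_posLinIndep _ _ (hPLI p.1 hp.1 p.2 hp.2.1 hp.2.2)
      exact ⟨v, hv, fun i hi => hneg i ⟨hi, hp.2.1 i⟩⟩
  obtain ⟨G, hG, hGQ⟩ := hQ.exists_pos_forall_norm_le fun i => (hgrad_cont i).mono hQD
  obtain ⟨ρ, hρ, r, hr, hrρ, hρη, hLρ, hrG, hρε⟩ := exists_cone_scale hδ hε hη hL hG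
  refine ⟨r, hr, ρ / r, by positivity, fun t ht x hx => ?_⟩
  obtain ⟨hxC, j, hj⟩ := exists_eq_zero_of_mem_frontier_setOf_forall_nonpos
    (fun i => Differentiable.continuous (hdiff i t ht)) hx
  have hxQ : (t, x) ∈ Q := ⟨ht, hxC, j, by simp [Iactive, hj, hε.le]⟩
  obtain ⟨v, hv, hvdir⟩ := hdir _ hxQ
  have hball : closedBall x η ⊆ Csub g t + closedBall 0 η :=
    singleton_add_closedBall_zero η x ▸ add_subset_add_right (singleton_subset_iff.2 hxC)
  refine ⟨x + ρ • v, fun y hy i => convexHull_insert_ball_subset_setOf_nonpos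
    (fun y _ => hdiff i t ht y)
    (fun y hy => hLip t ht i y (hball hy) x (hball (mem_closedBall_self hη.le)))
    hL.le (hxC i) (hGQ _ hxQ i) hv (hvdir i) hρ hr hrρ hρη hLρ hrG hρε hy, ?_⟩
  rw [add_sub_cancel_left, norm_smul, Real.norm_of_nonneg hρ.le, div_mul_cancel₀ _ hr.ne']
  exact mul_le_of_le_one_right hρ.le hv

theorem stmt12 (d m : ℕ) (T : ℝ) (hT : 0 < T)
    (g : Fin m → ℝ → EuclideanSpace ℝ (Fin d) → ℝ)
    (hdiff : ∀ i, ∀ t ∈ Icc (0:ℝ) T, ∀ x, DifferentiableAt ℝ (g i t) x)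
    -- assumption (a)
    (ε : ℝ) (hε : 0 < ε)
    (hQbdd : Bornology.IsBounded {p : ℝ × EuclideanSpace ℝ (Fin d) |
      p.1 ∈ Icc (0:ℝ) T ∧ p.2 ∈ Csub g p.1 ∧ (Iactive g ε p.1 p.2).Nonempty})
    (hPLI : ∀ t ∈ Icc (0:ℝ) T, ∀ x ∈ Csub g t, (Iactive g ε t x).Nonempty →
      ∀ α : Fin m → ℝ, (∀ i, 0 ≤ α i) → (∀ i, i ∉ Iactive g ε t x → α i = 0) →
        ∑ i, α i • gradient (g i t) x = 0 → ∀ i, α i = 0)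
    -- assumption (b)
    (hg_cont : ∀ i, ContinuousOn (fun p : ℝ × EuclideanSpace ℝ (Fin d) => g i p.1 p.2)
      (Icc (0:ℝ) T ×ˢ univ))
    (hgrad_cont : ∀ i, ContinuousOn
      (fun p : ℝ × EuclideanSpace ℝ (Fin d) => gradient (g i p.1) p.2)
      (Icc (0:ℝ) T ×ˢ univ))
    (hequi : ∀ ε' > 0, ∃ δ > 0, ∀ i, ∀ x : EuclideanSpace ℝ (Fin d),
      ∀ s ∈ Icc (0:ℝ) T, ∀ t ∈ Icc (0:ℝ) T, |s - t| < δ → |g i s x - g i t x| < ε')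
    -- assumption (c)
    (hLip : ∃ L > 0, ∃ η > 0, ∀ t ∈ Icc (0:ℝ) T, ∀ i,
      ∀ x ∈ Csub g t + closedBall (0 : EuclideanSpace ℝ (Fin d)) η,
      ∀ y ∈ Csub g t + closedBall (0 : EuclideanSpace ℝ (Fin d)) η,
        ‖gradient (g i t) x - gradient (g i t) y‖ ≤ L * ‖x - y‖) :
    ∃ r > 0, ∃ L > 0, CondH4 T (Csub g) r L :=
  stmt12_general d m T g hdiff ε hε hQbdd hPLI hg_cont hgrad_cont hLip
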